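/- Let J be as given, and suppose that every edge of the coding graph E_J is non-negative and that E_J contains no non-positive cycles. Let ω and ξ be paths in E_J of the same length with source vertices (μ_k, ν_k) and (μ_l, ν_l) ∈ J respectively, and let γ and δ be the L_J-labels of ω and ξ. If the concatenated path μ_kγ is a prefix of the concatenated path μ_lδ, then ω = ξ. -/

import Mathlib

/-- A finite directed multigraph. -/
structure FinGraph where
  V : Type
  E : Type
  fintV : Fintype V
  fintE : Fintype E
  src : E → V
  rng : E → V

variable {G : FinGraph}

/-- A finite path in the graph `G`: a source vertex together with a compatible
list of edges (a vertex is a path of length 0). -/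
structure FPath (G : FinGraph) where
  source : G.V
  edges : List G.E
  head_src : ∀ e ∈ edges.head?, G.src e = source
  chain : edges.Chain' fun e f => G.rng e = G.src f

/-- The range (terminal vertex) of a finite path. -/
def FPath.range (p : FPath G) : G.V :=
  p.edges.getLast?.elim p.source G.rng

/-- The length-0 path at a vertex. -/
def FPath.nil (G : FinGraph) (v : G.V) : FPath G :=
  ⟨v, [], by simp, List.isChain_nil⟩

/-- `p.Prefix q` : the path `p` is an initial segment of the path `q`. -/
def FPath.Prefix (p q : FPath G) : Prop :=
  p.source = q.source ∧ p.edges <+: q.edges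

/-- The path obtained by removing the first edge (the tail `κ` of `ν = eκ`). -/
def FPath.tail (p : FPath G) : FPath G where
  source := p.edges.head?.elim p.source G.rng
  edges := p.edges.tail
  head_src := by
    cases hp : p.edges with
    | nil => simp
    | cons a l =>
      have h : List.IsChain (fun e f => G.rng e = G.src f) p.edges := p.chain
      rw [hp, List.isChain_cons] at h
      intro e he
      simp only [hp, List.head?_cons, Option.elim, List.tail_cons] at he ⊢
      exact (h.1 e he).symm
  chain := p.chain.tail

/-- An infinite path in the graph `G`. -/
structure IPath (G : FinGraph) where
  edges : ℕ → G.E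
  chain : ∀ i, G.rng (edges i) = G.src (edges (i + 1))

/-- The source vertex of an infinite path. -/
def IPath.source (p : IPath G) : G.V := G.src (p.edges 0)

/-- The cylinder set `Z(p)` of a finite path `p`: all infinite paths with prefix `p`. -/
def cylinder (p : FPath G) : Set (IPath G) :=
  {q | q.source = p.source ∧ ∀ i, (h : i < p.edges.length) → q.edges i = p.edges.get ⟨i, h⟩}

/-- A finite collection `S` of finite paths is a partition of the path `ν`:
the cylinder sets are pairwise disjoint with union `Z(ν)`. -/
def IsPartitionOfPath (S : Set (FPath G)) (ν : FPath G) : Prop :=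
  S.Finite ∧ (∀ p ∈ S, ∀ q ∈ S, p ≠ q → cylinder p ∩ cylinder q = ∅) ∧
    (⋃ p ∈ S, cylinder p) = cylinder ν

/-- A finite collection `S` of finite paths is a partition of the vertex `v`. -/
def IsPartitionOf (S : Set (FPath G)) (v : G.V) : Prop :=
  IsPartitionOfPath S (FPath.nil G v)

/-- Standing assumptions: no sinks, no sources, every cycle has an exit. -/
structure Standing (G : FinGraph) : Prop where
  no_sinks : ∀ v : G.V, ∃ e, G.src e = v
  no_sources : ∀ v : G.V, ∃ e, G.rng e = v
  cycles_exit : ∀ p : FPath G, p.edges ≠ [] → p.range = p.source →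
    ∃ e ∈ p.edges, ∃ f, f ≠ e ∧ G.src f = G.src e

/-- The combinatorial conditions making `u_J = Σ_{(μ,ν) ∈ J} S_μ S_ν^*` a unitary:
`J` is finite, `s(μ) = s(ν)`, `r(μ) = r(ν)`, `|ν| ≥ 1` for all `(μ,ν) ∈ J`, and both
families of cylinder sets are pairwise disjoint with union all of `E^∞`. -/
structure IsUnitaryJ (G : FinGraph) (J : Set (FPath G × FPath G)) : Prop where
  finite : J.Finite
  src_eq : ∀ p ∈ J, (Prod.fst p).source = (Prod.snd p).source
  rng_eq : ∀ p ∈ J, FPath.range (Prod.fst p) = FPath.range (Prod.snd p)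
  ne_nil : ∀ p ∈ J, (Prod.snd p).edges ≠ []
  disj₁ : ∀ p ∈ J, ∀ q ∈ J, p ≠ q → cylinder (Prod.fst p) ∩ cylinder (Prod.fst q) = ∅
  union₁ : (⋃ p ∈ J, cylinder (Prod.fst p)) = Set.univ
  disj₂ : ∀ p ∈ J, ∀ q ∈ J, p ≠ q → cylinder (Prod.snd p) ∩ cylinder (Prod.snd q) = ∅
  union₂ : (⋃ p ∈ J, cylinder (Prod.snd p)) = Set.univ

/-- Adjacency in the coding graph `E_J`: there is an edge from `p = (μ₁, e₁ν₁)` to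
`q = (μ₂, e₂ν₂)` iff the tail `ν₁` and `μ₂` are prefix-comparable
(the combinatorial content of `S_{ν₁}^* S_{μ₂} ≠ 0`). -/
def CGAdj (p q : FPath G × FPath G) : Prop :=
  FPath.Prefix p.2.tail q.1 ∨ FPath.Prefix q.1 p.2.tail

/-- The degree `|μ₂| − |ν₁|` of the coding-graph edge from `p` to `q`. -/
def cgDeg (p q : FPath G × FPath G) : ℤ :=
  (q.1.edges.length : ℤ) - (p.2.tail.edges.length : ℤ)

/-- `IsAppend p q r` : the path `r` is the concatenation `p q`. -/
def IsAppend (p q r : FPath G) : Prop :=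
  r.source = p.source ∧ q.source = p.range ∧ r.edges = p.edges ++ q.edges

/-- A finite path in the coding graph `E_J`, recorded by the (nonempty) list of
vertices of `J` it visits (a single vertex is a path of length 0). -/
structure CGPath (G : FinGraph) (J : Set (FPath G × FPath G)) where
  verts : List (FPath G × FPath G)
  ne : verts ≠ []
  mem : ∀ v ∈ verts, v ∈ J
  adj : verts.Chain' CGAdj

/-- The `E`-label of a path in the coding graph: the list of distinguished first
edges `e` of the second coordinates of the vertices it visits. -/
def CGPath.elabel {J : Set (FPath G × FPath G)} (ω : CGPath G J) : List G.E :=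
  ω.verts.filterMap fun v => v.2.edges.head?

/-- `IsLabelOf l γ` : `γ` is the `L_J`-label of the coding-graph path visiting the
vertices in the list `l` (all of whose edges are non-negative): the concatenation of
the `L_J`-labels of its edges, and the empty path at `r(μ)` for the length-0 path
at a vertex `(μ, eν)`. -/
inductive IsLabelOf : List (FPath G × FPath G) → FPath G → Prop
  | single (p : FPath G × FPath G) (γ : FPath G) :
      γ.edges = [] → γ.source = FPath.range p.1 → IsLabelOf [p] γ
  | cons (p q : FPath G × FPath G) (rest : List (FPath G × FPath G)) (α γ δ : FPath G) :
      IsAppend p.2.tail α q.1 → IsLabelOf (q :: rest) γ → IsAppend α γ δ →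
      IsLabelOf (p :: q :: rest) δ

/-- Every edge of the coding graph `E_J` is non-negative. -/
def AllEdgesNonneg (G : FinGraph) (J : Set (FPath G × FPath G)) : Prop :=
  ∀ p ∈ J, ∀ q ∈ J, CGAdj p q → 0 ≤ cgDeg p q

/-- The coding graph `E_J` contains a non-positive cycle. -/
def HasNonposCycle (G : FinGraph) (J : Set (FPath G × FPath G)) : Prop :=
  ∃ ω : CGPath G J, 2 ≤ ω.verts.length ∧ ω.verts.getLast ω.ne = ω.verts.head ω.ne ∧
    ω.verts.Chain' fun p q => cgDeg p q ≤ 0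

/-- All outgoing edges of the vertex `p` in the coding graph `E_J` are positive. -/
def AllOutPositive (G : FinGraph) (J : Set (FPath G × FPath G))
    (p : FPath G × FPath G) : Prop :=
  ∀ q ∈ J, CGAdj p q → 0 < cgDeg p q

/-- `IsSnoc p f q` : the path `q` is `p` extended by the single edge `f`. -/
def IsSnoc (p : FPath G) (f : G.E) (q : FPath G) : Prop :=
  q.source = p.source ∧ q.edges = p.edges ++ [f]

/-- `IsSplitting G J p J'` : `J'` is the splitting of `J` at the vertex `p = (μ, eν)`,
i.e. `J' = (J ∖ {(μ,eν)}) ∪ {(μf, eνf) : f ∈ E¹, s(f) = r(μ)}`. -/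
def IsSplitting (G : FinGraph) (J : Set (FPath G × FPath G)) (p : FPath G × FPath G)
    (J' : Set (FPath G × FPath G)) : Prop :=
  p ∈ J ∧ ∀ q, q ∈ J' ↔ (q ∈ J ∧ q ≠ p) ∨
    ∃ f, G.src f = FPath.range p.1 ∧ IsSnoc p.1 f q.1 ∧ IsSnoc p.2 f q.2

/-- The set of negative edges of the coding graph `E_J`. -/
def negEdgeSet (G : FinGraph) (J : Set (FPath G × FPath G)) :
    Set ((FPath G × FPath G) × (FPath G × FPath G)) :=
  {e | e.1 ∈ J ∧ e.2 ∈ J ∧ CGAdj e.1 e.2 ∧ cgDeg e.1 e.2 < 0}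

/-- `IsFinalNeg G J p q ω d` : the edge from `p` to `q` in `E_J` is a final negative
edge with destination `d`, via the zero path `ω` from `q` to `d`; the height of the
edge is `ω.verts.length - 1`. -/
def IsFinalNeg (G : FinGraph) (J : Set (FPath G × FPath G))
    (p q : FPath G × FPath G) (ω : CGPath G J) (d : FPath G × FPath G) : Prop :=
  p ∈ J ∧ q ∈ J ∧ CGAdj p q ∧ cgDeg p q < 0 ∧
    ω.verts.head ω.ne = q ∧ ω.verts.getLast ω.ne = d ∧
    (ω.verts.Chain' fun a b => cgDeg a b = 0) ∧ AllOutPositive G J d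

/-- `(E_J, E)` is left-synchronizing with delay `m` : any two paths of length `m`
(i.e. with `m+1` vertices) in `E_J` with the same `E`-label have the same source. -/
def LeftSyncDelay (G : FinGraph) (J : Set (FPath G × FPath G)) (m : ℕ) : Prop :=
  ∀ ω ξ : CGPath G J, ω.verts.length = m + 1 → ξ.verts.length = m + 1 →
    ω.elabel = ξ.elabel → ω.verts.head ω.ne = ξ.verts.head ξ.ne

/-- An infinite path in the coding graph `E_J`. -/
structure CGIPath (G : FinGraph) (J : Set (FPath G × FPath G)) where
  verts : ℕ → FPath G × FPath G
  mem : ∀ i, verts i ∈ J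
  adj : ∀ i, CGAdj (verts i) (verts (i + 1))

/-- The infinite `E`-label of an infinite coding-graph path is the infinite path `α`. -/
def ELabelInf {J : Set (FPath G × FPath G)} (ω : CGIPath G J) (α : IPath G) : Prop :=
  ∀ i, (ω.verts i).2.edges.head? = some (α.edges i)

/-- A transducer with input alphabet `A`, output alphabet `B`, a finite state set,
an initial state and a transition function. -/
structure Transducer (A B : Type) where
  S : Type
  finS : Finite S
  init : S
  tr : S → A → S × List B

/-- The state sequence of a transducer on an infinite input word. -/
def Transducer.states {A B : Type} (T : Transducer A B) (α : ℕ → A) : ℕ → T.S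
  | 0 => T.init
  | n + 1 => (T.tr (T.states α n) (α n)).1

/-- The `n`-th output block of a transducer on an infinite input word. -/
def Transducer.outBlock {A B : Type} (T : Transducer A B) (α : ℕ → A) (n : ℕ) : List B :=
  (T.tr (T.states α n) (α n)).2

/-- The concatenation of the first `n` blocks of a sequence of finite words. -/
def joinUpTo {X : Type} (f : ℕ → List X) (n : ℕ) : List X :=
  ((List.range n).map f).flatten

/-- Two infinite concatenations of sequences of finite words are equal. -/
def StreamsEq {X : Type} (f g : ℕ → List X) : Prop :=
  (∀ n, ∃ m, joinUpTo f n <+: joinUpTo g m) ∧ ∀ n, ∃ m, joinUpTo g n <+: joinUpTo f m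

/-- The type of edges of the coding graph `E_J`. -/
def CGEdgeT (G : FinGraph) (J : Set (FPath G × FPath G)) : Type :=
  {e : (FPath G × FPath G) × (FPath G × FPath G) // e.1 ∈ J ∧ e.2 ∈ J ∧ CGAdj e.1 e.2}

/-- The sequence of edges of an infinite coding-graph path. -/
def CGIPath.edgeSeq {J : Set (FPath G × FPath G)} (ω : CGIPath G J) (i : ℕ) : CGEdgeT G J :=
  ⟨(ω.verts i, ω.verts (i + 1)), ω.mem i, ω.mem (i + 1), ω.adj i⟩

/-! If `μ_k γ ≼ μ_l δ`, then `μ_k` and `μ_l` are prefix-comparable; since the cylinders `Z(μ)` for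
`(μ, ν) ∈ J` are pairwise disjoint and (without sinks) nonempty, comparable `μ`'s are equal, so the
two paths start at the same vertex `(μ, eν)`. Cancelling `μ`, both labels start with `ν`, and the
`μ`-component of the next vertex is `ν α` with `α` the label of the first edge; induct on the
length. -/

namespace FPath

lemma exists_mem_cylinder (no_sinks : ∀ v : G.V, ∃ e, G.src e = v) (p : FPath G) :
    ∃ q : IPath G, q ∈ cylinder p := by
  classical
  choose next hnext using no_sinks
  let f : ℕ → G.E := fun n => Nat.rec
    (if h : 0 < p.edges.length then p.edges[0] else next p.source)
    (fun n prev => if h : n + 1 < p.edges.length then p.edges[n + 1] else next (G.rng prev)) n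
  have hf : ∀ i (h : i < p.edges.length), f i = p.edges[i] := by
    rintro (_ | _) h <;> exact dif_pos h
  have hchain : ∀ i, G.rng (f i) = G.src (f (i + 1)) := by
    intro i
    by_cases h : i + 1 < p.edges.length
    · rw [hf i (by omega), hf (i + 1) h]
      exact List.isChain_iff_getElem.mp p.chain i h
    · rw [show f (i + 1) = next (G.rng (f i)) from dif_neg h, hnext]
  refine ⟨⟨f, hchain⟩, ?_, hf⟩
  change G.src (f 0) = p.source
  cases hp : p.edges with
  | nil => rw [show f 0 = next p.source from dif_neg (by simp [hp]), hnext]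
  | cons a l =>
    rw [hf 0 (by simp [hp])]
    exact p.head_src _ (by simp [hp])

lemma cylinder_subset_of_prefix {p q : FPath G} (h : p.Prefix q) : cylinder q ⊆ cylinder p :=
  fun x ⟨hsrc, hx⟩ => ⟨hsrc.trans h.1.symm, fun i hi => by
    rw [hx i (hi.trans_le h.2.length_le)]
    exact (h.2.getElem hi).symm⟩

end FPath

lemma eq_of_fst_prefix (no_sinks : ∀ v : G.V, ∃ e, G.src e = v)
    {J : Set (FPath G × FPath G)}
    (hdisj : ∀ p ∈ J, ∀ q ∈ J, p ≠ q → cylinder p.1 ∩ cylinder q.1 = ∅)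
    {p q : FPath G × FPath G} (hp : p ∈ J) (hq : q ∈ J) (h : p.1.Prefix q.1) : p = q := by
  by_contra hne
  obtain ⟨x, hx⟩ := q.1.exists_mem_cylinder no_sinks
  have hx' : x ∈ cylinder p.1 ∩ cylinder q.1 := ⟨FPath.cylinder_subset_of_prefix h hx, hx⟩
  simp [hdisj p hp q hq hne] at hx'

lemma edges_append_eq_of_isAppend {ν α μ γ δ : FPath G} (hμ : IsAppend ν α μ)
    (hδ : IsAppend α γ δ) : μ.edges ++ γ.edges = ν.edges ++ δ.edges := by
  rw [hμ.2.2, hδ.2.2, List.append_assoc]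

lemma IsLabelOf.eq_of_prefix (no_sinks : ∀ v : G.V, ∃ e, G.src e = v)
    {J : Set (FPath G × FPath G)}
    (hdisj : ∀ p ∈ J, ∀ q ∈ J, p ≠ q → cylinder p.1 ∩ cylinder q.1 = ∅)
    {l l' : List (FPath G × FPath G)} {γ γ' : FPath G}
    (hγ : IsLabelOf l γ) (hγ' : IsLabelOf l' γ')
    (hl : ∀ v ∈ l, v ∈ J) (hl' : ∀ v ∈ l', v ∈ J) (hlen : l.length = l'.length)
    (hne : l ≠ []) (hne' : l' ≠ []) (hsrc : (l.head hne).1.source = (l'.head hne').1.source)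
    (hpre : (l.head hne).1.edges ++ γ.edges <+: (l'.head hne').1.edges ++ γ'.edges) :
    l = l' := by
  induction hγ generalizing l' γ' with
  | single p γ hγ _ =>
    cases hγ' with
    | single q γ' hγ' _ =>
      simp only [List.head_cons, hγ, hγ', List.append_nil] at hsrc hpre
      rw [eq_of_fst_prefix no_sinks hdisj (hl p (by simp)) (hl' q (by simp)) ⟨hsrc, hpre⟩]
    | cons => simp at hlen
  | cons p q rest α γ δ hq hlabel hδ ih =>
    cases hγ' with
    | single => simp at hlen
    | cons p' q' rest' α' γ' δ' hq' hlabel' hδ' =>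
      simp only [List.head_cons] at hsrc hpre
      have hpp' : p = p' := by
        rcases List.prefix_or_prefix_of_prefix ((List.prefix_append _ _).trans hpre)
          (List.prefix_append _ _) with h | h
        · exact eq_of_fst_prefix no_sinks hdisj (hl p (by simp)) (hl' p' (by simp)) ⟨hsrc, h⟩
        · exact (eq_of_fst_prefix no_sinks hdisj (hl' p' (by simp)) (hl p (by simp))
            ⟨hsrc.symm, h⟩).symm
      subst hpp'
      have hpre' : q.1.edges ++ γ.edges <+: q'.1.edges ++ γ'.edges := by
        rw [edges_append_eq_of_isAppend hq hδ, edges_append_eq_of_isAppend hq' hδ']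
        exact (List.prefix_append_right_inj _).mpr ((List.prefix_append_right_inj _).mp hpre)
      rw [ih hlabel' (fun v hv => hl v (.tail _ hv)) (fun v hv => hl' v (.tail _ hv))
        (by simpa using hlen) (by simp) (by simp) (hq.1.trans hq'.1.symm) hpre']

theorem no_subpath_label_general (G : FinGraph) (hG : Standing G)
    (J : Set (FPath G × FPath G)) (hJ : IsUnitaryJ G J)
    (ω ξ : CGPath G J) (hlen : ω.verts.length = ξ.verts.length)
    (γ δ : FPath G) (hγ : IsLabelOf ω.verts γ) (hδ : IsLabelOf ξ.verts δ)
    (hsrc : (ω.verts.head ω.ne).1.source = (ξ.verts.head ξ.ne).1.source)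
    (hpre : ((ω.verts.head ω.ne).1.edges ++ γ.edges) <+:
      ((ξ.verts.head ξ.ne).1.edges ++ δ.edges)) :
    ω = ξ := by
  have hverts : ω.verts = ξ.verts :=
    hγ.eq_of_prefix hG.no_sinks hJ.disj₁ hδ ω.mem ξ.mem hlen ω.ne ξ.ne hsrc hpre
  cases ω
  cases ξ
  congr

/-- Lemma 5.9: if all edges of `E_J` are non-negative and `E_J` has no
non-positive cycles, and `ω, ξ` are equal-length paths in `E_J` with source vertices
`(μ_k, ν_k), (μ_l, ν_l) ∈ J` and `L_J`-labels `γ, δ`, then `μ_k γ ≼ μ_l δ` implies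
`ω = ξ`. -/
theorem no_subpath_label (G : FinGraph) (hG : Standing G)
    (J : Set (FPath G × FPath G)) (hJ : IsUnitaryJ G J)
    (hnn : AllEdgesNonneg G J) (hnc : ¬ HasNonposCycle G J)
    (ω ξ : CGPath G J) (hlen : ω.verts.length = ξ.verts.length)
    (γ δ : FPath G) (hγ : IsLabelOf ω.verts γ) (hδ : IsLabelOf ξ.verts δ)
    (hsrc : (ω.verts.head ω.ne).1.source = (ξ.verts.head ξ.ne).1.source)
    (hpre : ((ω.verts.head ω.ne).1.edges ++ γ.edges) <+:
      ((ξ.verts.head ξ.ne).1.edges ++ δ.edges)) :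
    ω = ξ :=
  no_subpath_label_general G hG J hJ ω ξ hlen γ δ hγ hδ hsrc hpre
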